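/- arXiv:2409.04835 — 4 statements merged into one kernel-verified Lean document; each statement's English description precedes it below -/
import Mathlib

section
/- Let K be a generalized paracomplex structure on T compatible with the generalized metric E = {X + g(X) + Θ(X)} (i.e., KE ⊆ E). Then K also preserves E^⊥ = {X - g(X) + Θ(X)}, and the induced maps K₁ = (pr_T|E) ∘ K ∘ (pr_T|E)^{-1} and K₂ = (pr_T|E^⊥) ∘ K ∘ (pr_T|E^⊥)^{-1} are paracomplex structures on T compatible with the metric g (K_i² = Id and g(K_iX,Y) + g(X,K_iY) = 0). -/
/-!
For `B : T → T*` let `Γ_B = {X + B X}`, so `E = Γ_{g+Θ}` and `E^⊥ = Γ_{-g+Θ}`. If `K` preserves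
`Γ_B`, it acts on `Γ_B ≅ T` by an endomorphism `K_B`; `K² = 1` gives `K_B² = 1`, and skewness of
`K` for the pairing gives skewness of `K_B` for the symmetric part of `B`, which is `±2g`.
The graph of `-Bᵀ` is the orthogonal complement of `Γ_B`, and a skew `K` preserves orthogonal
complements of the subspaces it preserves.
-/

namespace GeneralizedGeometry

open Module

variable {𝕜 T : Type*} [Field 𝕜] [AddCommGroup T] [Module 𝕜 T]

def pairing (A C : T × Dual 𝕜 T) : 𝕜 := (A.2 C.1 + C.2 A.1) / 2

def graphMap (B : T →ₗ[𝕜] Dual 𝕜 T) : T →ₗ[𝕜] T × Dual 𝕜 T :=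
  LinearMap.prod LinearMap.id B

def PreservesGraph (K : T × Dual 𝕜 T →ₗ[𝕜] T × Dual 𝕜 T) (B : T →ₗ[𝕜] Dual 𝕜 T) : Prop :=
  ∀ X, ∃ Y, K (X, B X) = (Y, B Y)

/-- The map `pr_T ∘ K ∘ (pr_T|Γ_B)⁻¹` on `T`. -/
def inducedMap (K : T × Dual 𝕜 T →ₗ[𝕜] T × Dual 𝕜 T) (B : T →ₗ[𝕜] Dual 𝕜 T) : T →ₗ[𝕜] T :=
  LinearMap.fst 𝕜 T (Dual 𝕜 T) ∘ₗ K ∘ₗ graphMap B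

variable {K : T × Dual 𝕜 T →ₗ[𝕜] T × Dual 𝕜 T} {B : T →ₗ[𝕜] Dual 𝕜 T}

theorem PreservesGraph.apply_eq (h : PreservesGraph K B) (X : T) :
    K (X, B X) = (inducedMap K B X, B (inducedMap K B X)) := by
  obtain ⟨Y, hY⟩ := h X
  have hK : inducedMap K B X = Y := congrArg Prod.fst hY
  rw [hK, hY]

theorem PreservesGraph.inducedMap_comp_self (hK2 : ∀ A, K (K A) = A) (h : PreservesGraph K B) :
    inducedMap K B ∘ₗ inducedMap K B = LinearMap.id := by
  ext X
  have hX := hK2 (X, B X)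
  rw [h.apply_eq, h.apply_eq] at hX
  exact congrArg Prod.fst hX

variable [NeZero (2 : 𝕜)]

theorem pairing_eq_zero_iff {A C : T × Dual 𝕜 T} :
    pairing A C = 0 ↔ A.2 C.1 + C.2 A.1 = 0 := by
  simp [pairing, two_ne_zero]

theorem PreservesGraph.inducedMap_skew (hskew : ∀ A C, pairing (K A) C + pairing A (K C) = 0)
    (h : PreservesGraph K B) (X Y : T) :
    (B (inducedMap K B X) Y + B Y (inducedMap K B X)) +
      (B X (inducedMap K B Y) + B (inducedMap K B Y) X) = 0 := by
  have hXY := hskew (X, B X) (Y, B Y)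
  rw [h.apply_eq, h.apply_eq, pairing, pairing, ← add_div, div_eq_zero_iff] at hXY
  exact hXY.resolve_right two_ne_zero

theorem PreservesGraph.of_neg_transpose {B' : T →ₗ[𝕜] Dual 𝕜 T} (hB' : ∀ X Z, B' X Z = -B Z X)
    (hskew : ∀ A C, pairing (K A) C + pairing A (K C) = 0) (h : PreservesGraph K B) :
    PreservesGraph K B' := by
  intro X
  refine ⟨(K (X, B' X)).1, Prod.ext rfl ?_⟩
  ext Z
  have horth : pairing (X, B' X) (K (Z, B Z)) = 0 := by
    rw [h.apply_eq, pairing_eq_zero_iff, hB', neg_add_cancel]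
  have hZ := hskew (X, B' X) (Z, B Z)
  rw [horth, add_zero, pairing_eq_zero_iff] at hZ
  rw [hB', eq_neg_iff_add_eq_zero]
  exact hZ

theorem PreservesGraph.inducedMap_skew_of_symm {g : T →ₗ[𝕜] Dual 𝕜 T} {c : 𝕜} (hc : c ≠ 0)
    (hB : ∀ X Y, B X Y + B Y X = c * g X Y)
    (hskew : ∀ A C, pairing (K A) C + pairing A (K C) = 0) (h : PreservesGraph K B) (X Y : T) :
    g (inducedMap K B X) Y + g X (inducedMap K B Y) = 0 := by
  have hXY := h.inducedMap_skew hskew X Y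
  rw [hB, hB, ← mul_add, mul_eq_zero] at hXY
  exact hXY.resolve_left hc

end GeneralizedGeometry

open GeneralizedGeometry in
theorem stmt14_general (T : Type) [AddCommGroup T] [Module ℝ T]
    (g : T ≃ₗ[ℝ] Module.Dual ℝ T) (hsym : ∀ X Y, g X Y = g Y X)
    (Θ : T →ₗ[ℝ] Module.Dual ℝ T) (halt : ∀ X Y, Θ X Y = -(Θ Y X))
    (K : T × Module.Dual ℝ T →ₗ[ℝ] T × Module.Dual ℝ T)
    (hK2 : ∀ A, K (K A) = A)
    (hskew : ∀ A C : T × Module.Dual ℝ T,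
      ((K A).2 C.1 + C.2 (K A).1) / 2 + (A.2 (K C).1 + (K C).2 A.1) / 2 = 0)
    (hcompat : ∀ X : T, ∃ Y : T, K (X, g X + Θ X) = (Y, g Y + Θ Y)) :
    (∀ X : T, ∃ Y : T, K (X, -(g X) + Θ X) = (Y, -(g Y) + Θ Y)) ∧
    (∃ K₁ K₂ : T →ₗ[ℝ] T,
      (∀ X : T, K (X, g X + Θ X) = (K₁ X, g (K₁ X) + Θ (K₁ X))) ∧
      (∀ X : T, K (X, -(g X) + Θ X) = (K₂ X, -(g (K₂ X)) + Θ (K₂ X))) ∧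
      K₁ ∘ₗ K₁ = LinearMap.id ∧ K₂ ∘ₗ K₂ = LinearMap.id ∧
      (∀ X Y : T, g (K₁ X) Y + g X (K₁ Y) = 0) ∧
      (∀ X Y : T, g (K₂ X) Y + g X (K₂ Y) = 0)) := by
  set G : T →ₗ[ℝ] Module.Dual ℝ T := g.toLinearMap
  have hE : PreservesGraph K (G + Θ) := hcompat
  have hperp : ∀ X Z, (-G + Θ) X Z = -((G + Θ) Z X) := fun X Z => by
    simp only [LinearMap.add_apply, LinearMap.neg_apply, G, LinearEquiv.coe_coe, hsym X Z,
      halt X Z]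
    ring
  have hE' : PreservesGraph K (-G + Θ) := hE.of_neg_transpose hperp hskew
  have hsymm (s : ℝ) (X Y : T) : (s • G + Θ) X Y + (s • G + Θ) Y X = (2 * s) * G X Y := by
    simp only [LinearMap.add_apply, LinearMap.smul_apply, G, LinearEquiv.coe_coe, hsym Y X,
      halt Y X, smul_eq_mul]
    ring
  refine ⟨hE', inducedMap K (G + Θ), inducedMap K (-G + Θ), hE.apply_eq, hE'.apply_eq,
    hE.inducedMap_comp_self hK2, hE'.inducedMap_comp_self hK2,
    hE.inducedMap_skew_of_symm (g := G) (c := 2) two_ne_zero ?_ hskew,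
    hE'.inducedMap_skew_of_symm (g := G) (c := -2) (by norm_num) ?_ hskew⟩
  · simpa using hsymm 1
  · simpa using hsymm (-1)

/-- If a generalized paracomplex structure `K` on `T` preserves the generalized metric
`E = {X + g(X) + Θ(X)}`, then it also preserves `E^⊥ = {X - g(X) + Θ(X)}`, and the
induced endomorphisms `K₁`, `K₂` of `T` are paracomplex structures compatible with
the metric `g`. -/
theorem stmt14 (T : Type) [AddCommGroup T] [Module ℝ T] [FiniteDimensional ℝ T]
    (g : T ≃ₗ[ℝ] Module.Dual ℝ T) (hsym : ∀ X Y, g X Y = g Y X)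
    (Θ : T →ₗ[ℝ] Module.Dual ℝ T) (halt : ∀ X Y, Θ X Y = -(Θ Y X))
    (K : T × Module.Dual ℝ T →ₗ[ℝ] T × Module.Dual ℝ T)
    (hK2 : ∀ A, K (K A) = A)
    (hskew : ∀ A C : T × Module.Dual ℝ T,
      ((K A).2 C.1 + C.2 (K A).1) / 2 + (A.2 (K C).1 + (K C).2 A.1) / 2 = 0)
    (hcompat : ∀ X : T, ∃ Y : T, K (X, g X + Θ X) = (Y, g Y + Θ Y)) :
    (∀ X : T, ∃ Y : T, K (X, -(g X) + Θ X) = (Y, -(g Y) + Θ Y)) ∧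
    (∃ K₁ K₂ : T →ₗ[ℝ] T,
      (∀ X : T, K (X, g X + Θ X) = (K₁ X, g (K₁ X) + Θ (K₁ X))) ∧
      (∀ X : T, K (X, -(g X) + Θ X) = (K₂ X, -(g (K₂ X)) + Θ (K₂ X))) ∧
      K₁ ∘ₗ K₁ = LinearMap.id ∧ K₂ ∘ₗ K₂ = LinearMap.id ∧
      (∀ X Y : T, g (K₁ X) Y + g X (K₁ Y) = 0) ∧
      (∀ X Y : T, g (K₂ X) Y + g X (K₂ Y) = 0)) :=
  stmt14_general T g hsym Θ halt K hK2 hskew hcompat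
end

section
/- Let g be a nondegenerate symmetric bilinear form on T and E = {X + g(X) : X ∈ T} its graph. A generalized paracomplex structure K on T preserves E if and only if K is skew-symmetric with respect to the metric ĝ = g ⊕ g* on T ⊕ T*, where g* is the induced metric on T*. -/
/-!
Write `⟪A, C⟫ = A.2 C.1 + C.2 A.1` for twice the canonical pairing on `T ⊕ T*` and
`τ (X, α) = (g⁻¹ α, g X)`, an involution whose `+1`-eigenspace is the graph `E` of `g`.
Then `ĝ(A, C) = ⟪A, τ C⟫`, so for a `⟪·,·⟫`-skew `K` the defect `ĝ(K A, C) + ĝ(A, K C)` is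
`⟪A, (τ K - K τ) C⟫`; as `⟪·,·⟫` is nondegenerate, `K` is `ĝ`-skew iff it commutes with `τ`.
On the other hand the `⟪·,·⟫`-orthogonal of `E` is the `-1`-eigenspace of `τ`, so a `⟪·,·⟫`-skew
`K` preserving `E` preserves both eigenspaces, i.e. commutes with `τ`.
-/

open Module

namespace GeneralizedTangent

variable {R M : Type*} [CommRing R] [AddCommGroup M] [Module R M]

/-- Twice the pairing `⟨X + α, Y + β⟩ = ½(α Y + β X)`, which avoids dividing by `2`. -/
def pairing (A C : M × Dual R M) : R := A.2 C.1 + C.2 A.1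

/-- The metric `ĝ = g ⊕ g*`. -/
def sumMetric (g : M ≃ₗ[R] Dual R M) (A C : M × Dual R M) : R := g A.1 C.1 + A.2 (g.symm C.2)

def metricSwap (g : M ≃ₗ[R] Dual R M) : (M × Dual R M) →ₗ[R] M × Dual R M :=
  (g.symm.toLinearMap ∘ₗ LinearMap.snd R M (Dual R M)).prod
    (g.toLinearMap ∘ₗ LinearMap.fst R M (Dual R M))

variable {g : M ≃ₗ[R] Dual R M}

@[simp]
lemma metricSwap_apply (A : M × Dual R M) : metricSwap g A = (g.symm A.2, g A.1) := rfl

lemma metricSwap_metricSwap (A : M × Dual R M) : metricSwap g (metricSwap g A) = A := by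
  simp

lemma pairing_sub_right (A C D : M × Dual R M) :
    pairing A (C - D) = pairing A C - pairing A D := by
  simp only [pairing, Prod.fst_sub, Prod.snd_sub, map_sub, LinearMap.sub_apply]
  ring

lemma pairing_metricSwap (hsym : ∀ X Y, g X Y = g Y X) (A C : M × Dual R M) :
    pairing A (metricSwap g C) = sumMetric g A C := by
  rw [pairing, sumMetric, metricSwap_apply, hsym, add_comm]

lemma eq_zero_of_forall_pairing_eq_zero (hsym : ∀ X Y, g X Y = g Y X) {D : M × Dual R M}
    (h : ∀ A, pairing A D = 0) : D = 0 := by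
  have hfst : g D.1 = 0 := by
    ext Y
    simpa [pairing, hsym Y] using h (0, g Y)
  refine Prod.ext (by simpa using hfst) (LinearMap.ext fun X => ?_)
  simpa [pairing] using h (X, 0)

lemma exists_eq_graph_iff (A : M × Dual R M) :
    (∃ Y, A = (Y, g Y)) ↔ metricSwap g A = A := by
  constructor
  · rintro ⟨Y, rfl⟩
    simp
  · intro h
    exact ⟨A.1, Prod.ext rfl (congrArg Prod.snd h).symm⟩

lemma forall_pairing_graph_eq_zero_iff (hsym : ∀ X Y, g X Y = g Y X) (u : M × Dual R M) :
    (∀ Z, pairing u (Z, g Z) = 0) ↔ metricSwap g u = -u := by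
  have hu : (∀ Z, pairing u (Z, g Z) = 0) ↔ u.2 = -g u.1 := by
    simp only [pairing, hsym _ u.1, LinearMap.ext_iff, LinearMap.neg_apply]
    exact forall_congr' fun Z => add_eq_zero_iff_eq_neg
  rw [hu, metricSwap_apply, Prod.ext_iff, Prod.fst_neg, Prod.snd_neg,
    LinearEquiv.symm_apply_eq, map_neg]
  exact ⟨fun h => ⟨h, by rw [h, neg_neg]⟩, And.left⟩

variable {K : (M × Dual R M) →ₗ[R] M × Dual R M}

lemma sumMetric_skew_iff_commute_metricSwap (hsym : ∀ X Y, g X Y = g Y X)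
    (hK : ∀ A C, pairing (K A) C + pairing A (K C) = 0) :
    (∀ A C, sumMetric g (K A) C + sumMetric g A (K C) = 0) ↔
      ∀ C, K (metricSwap g C) = metricSwap g (K C) := by
  have defect : ∀ A C, sumMetric g (K A) C + sumMetric g A (K C) =
      pairing A (metricSwap g (K C) - K (metricSwap g C)) := fun A C => by
    rw [← pairing_metricSwap hsym, ← pairing_metricSwap hsym, pairing_sub_right,
      eq_neg_of_add_eq_zero_left (hK A _)]
    ring
  simp only [defect]
  refine ⟨fun h C => ?_, fun h A C => by rw [h, sub_self, pairing, Prod.fst_zero, Prod.snd_zero,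
    map_zero, LinearMap.zero_apply, zero_add]⟩
  exact (sub_eq_zero.1 (eq_zero_of_forall_pairing_eq_zero hsym (h · C))).symm

lemma metricSwap_map_of_metricSwap_eq_neg (hsym : ∀ X Y, g X Y = g Y X)
    (hK : ∀ A C, pairing (K A) C + pairing A (K C) = 0)
    (hE : ∀ X, ∃ Y, K (X, g X) = (Y, g Y)) {v : M × Dual R M} (hv : metricSwap g v = -v) :
    metricSwap g (K v) = -K v := by
  refine (forall_pairing_graph_eq_zero_iff hsym (K v)).1 fun Z => ?_
  obtain ⟨Y, hY⟩ := hE Z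
  rw [eq_neg_of_add_eq_zero_left (hK v _), hY,
    (forall_pairing_graph_eq_zero_iff hsym v).2 hv Y, neg_zero]

lemma preserves_graph_iff_commute_metricSwap (hsym : ∀ X Y, g X Y = g Y X)
    (hK : ∀ A C, pairing (K A) C + pairing A (K C) = 0) (h2 : IsUnit (2 : R)) :
    (∀ X, ∃ Y, K (X, g X) = (Y, g Y)) ↔ ∀ C, K (metricSwap g C) = metricSwap g (K C) := by
  constructor
  · intro hE C
    set a := C + metricSwap g C
    set b := C - metricSwap g C
    have ha : metricSwap g a = a := by
      simp only [a, map_add, metricSwap_metricSwap, add_comm]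
    have hb : metricSwap g b = -b := by
      simp only [b, map_sub, metricSwap_metricSwap, neg_sub]
    have hKa : metricSwap g (K a) = K a := by
      obtain ⟨X, hX⟩ := (exists_eq_graph_iff a).2 ha
      obtain ⟨Y, hY⟩ := hE X
      rw [hX, hY]
      exact (exists_eq_graph_iff _).1 ⟨Y, rfl⟩
    have hKb : metricSwap g (K b) = -K b :=
      metricSwap_map_of_metricSwap_eq_neg hsym hK hE hb
    refine (h2.smul_left_cancel).1 ?_
    calc (2 : R) • K (metricSwap g C) = K (a - b) := by
          rw [← map_smul]
          congr 1
          simp only [a, b]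
          module
      _ = metricSwap g (K a) + metricSwap g (K b) := by rw [map_sub, hKa, hKb, sub_eq_add_neg]
      _ = (2 : R) • metricSwap g (K C) := by
          rw [← map_add, ← map_add, ← map_smul, ← map_smul]
          congr 2
          simp only [a, b]
          module
  · intro hτ X
    have hfix : metricSwap g (K (X, g X)) = K (X, g X) := by
      rw [← hτ]
      simp
    exact (exists_eq_graph_iff _).2 hfix

end GeneralizedTangent

open GeneralizedTangent in
theorem stmt15_general (T : Type) [AddCommGroup T] [Module ℝ T]
    (g : T ≃ₗ[ℝ] Module.Dual ℝ T) (hsym : ∀ X Y, g X Y = g Y X)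
    (K : T × Module.Dual ℝ T →ₗ[ℝ] T × Module.Dual ℝ T)
    (hskew : ∀ A C : T × Module.Dual ℝ T,
      ((K A).2 C.1 + C.2 (K A).1) / 2 + (A.2 (K C).1 + (K C).2 A.1) / 2 = 0) :
    let ghat : T × Module.Dual ℝ T → T × Module.Dual ℝ T → ℝ :=
      fun A C => g A.1 C.1 + A.2 (g.symm C.2)
    ((∀ X : T, ∃ Y : T, K (X, g X) = (Y, g Y)) ↔
      (∀ A C : T × Module.Dual ℝ T, ghat (K A) C + ghat A (K C) = 0)) := by
  intro ghat
  have hK : ∀ A C, pairing (K A) C + pairing A (K C) = 0 := fun A C => by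
    simp only [pairing]
    linarith [hskew A C]
  exact (preserves_graph_iff_commute_metricSwap hsym hK (IsUnit.mk0 2 two_ne_zero)).trans
    (sumMetric_skew_iff_commute_metricSwap hsym hK).symm

/-- A generalized paracomplex structure `K` on `T` preserves the graph
`E = {X + g(X)}` of a nondegenerate symmetric form `g` if and only if `K` is
skew-symmetric with respect to the metric `ĝ = g ⊕ g*` on `T ⊕ T*`. -/
theorem stmt15 (T : Type) [AddCommGroup T] [Module ℝ T] [FiniteDimensional ℝ T]
    (g : T ≃ₗ[ℝ] Module.Dual ℝ T) (hsym : ∀ X Y, g X Y = g Y X)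
    (K : T × Module.Dual ℝ T →ₗ[ℝ] T × Module.Dual ℝ T)
    (hK2 : ∀ A, K (K A) = A)
    (hskew : ∀ A C : T × Module.Dual ℝ T,
      ((K A).2 C.1 + C.2 (K A).1) / 2 + (A.2 (K C).1 + (K C).2 A.1) / 2 = 0) :
    let ghat : T × Module.Dual ℝ T → T × Module.Dual ℝ T → ℝ :=
      fun A C => g A.1 C.1 + A.2 (g.symm C.2)
    ((∀ X : T, ∃ Y : T, K (X, g X) = (Y, g Y)) ↔
      (∀ A C : T × Module.Dual ℝ T, ghat (K A) C + ghat A (K C) = 0)) :=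
  stmt15_general T g hsym K hskew
end

section
/- Let ω be a nondegenerate alternating bilinear form on T and L a product structure (L² = Id, L ≠ ±Id) such that the symmetric bilinear form g(X,Y) = ½(ω(LX,Y) - ω(X,LY)) is nondegenerate. Define Θ(X,Y) = ½(ω(LX,Y) + ω(X,LY)). Then L is skew-symmetric with respect to g, and the generalized paracomplex structure K_ω(X+α) = ω^{-1}(α) + ω(X) preserves the generalized metric E = {X + g(X) + Θ(X) : X ∈ T}. -/
/-! Since `g + Θ = ω ∘ L`, the metric `E` is the graph of `ω ∘ L`, and `K_ω` maps the point
`X + ω(LX)` of it to `LX + ω(X) = LX + ω(L(LX))`, again a point of the graph because `L² = 1`.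
The skew-symmetry of `L` with respect to `g` is the same identity `L² = 1` read in each slot. -/

theorem half_smul_sub_add_half_smul_add {K M : Type*} [Field K] [NeZero (2 : K)]
    [AddCommGroup M] [Module K M] (a b : M) :
    (1 / 2 : K) • (a - b) + (1 / 2 : K) • (a + b) = a := by
  rw [← smul_add, sub_add_add_cancel, ← two_smul K a, smul_smul,
    one_div_mul_cancel (NeZero.ne 2), one_smul]

section Involution

variable {R M : Type*} [CommRing R] [AddCommGroup M] [Module R M]
  {L : M →ₗ[R] M}

theorem smul_comp_sub_dualMap_comp_skew_of_involution (hL : L ∘ₗ L = LinearMap.id)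
    (ω : M →ₗ[R] Module.Dual R M) (c : R) (X Y : M) :
    (c • (ω ∘ₗ L - L.dualMap ∘ₗ ω)) (L X) Y + (c • (ω ∘ₗ L - L.dualMap ∘ₗ ω)) X (L Y) = 0 := by
  have hLL : ∀ Z, L (L Z) = Z := LinearMap.ext_iff.mp hL
  simp only [LinearMap.smul_apply, LinearMap.sub_apply, LinearMap.comp_apply,
    LinearMap.dualMap_apply, hLL, smul_eq_mul]
  ring

theorem exists_swap_mem_graph_comp_involution {N : Type*} [AddCommGroup N] [Module R N]
    (hL : L ∘ₗ L = LinearMap.id) (ω : M ≃ₗ[R] N) (X : M) :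
    ∃ Y : M, (ω.symm (ω (L X)), ω X) = (Y, ω (L Y)) :=
  ⟨L X, by rw [ω.symm_apply_apply, ← LinearMap.comp_apply L L, hL, LinearMap.id_apply]⟩

end Involution

theorem stmt17_general (T : Type) [AddCommGroup T] [Module ℝ T]
    (ω : T ≃ₗ[ℝ] Module.Dual ℝ T)
    (L : T →ₗ[ℝ] T) (hL2 : L ∘ₗ L = LinearMap.id) :
    let gm : T →ₗ[ℝ] Module.Dual ℝ T :=
      (1/2 : ℝ) • (ω.toLinearMap ∘ₗ L - L.dualMap ∘ₗ ω.toLinearMap)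
    let Θm : T →ₗ[ℝ] Module.Dual ℝ T :=
      (1/2 : ℝ) • (ω.toLinearMap ∘ₗ L + L.dualMap ∘ₗ ω.toLinearMap)
    ∀ _hnd : ∀ X : T, (∀ Y : T, gm X Y = 0) → X = 0,
    (∀ X Y : T, gm (L X) Y + gm X (L Y) = 0) ∧
    (∀ X : T, ∃ Y : T,
      ((ω.symm (gm X + Θm X), ω X) : T × Module.Dual ℝ T) = (Y, gm Y + Θm Y)) := by
  intro gm Θm _
  have hgΘ : ∀ Z, gm Z + Θm Z = ω (L Z) := fun Z =>
    half_smul_sub_add_half_smul_add (K := ℝ) (ω (L Z)) (L.dualMap (ω Z))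
  refine ⟨smul_comp_sub_dualMap_comp_skew_of_involution hL2 ω.toLinearMap _, fun X => ?_⟩
  simp only [hgΘ]
  exact exists_swap_mem_graph_comp_involution hL2 ω X

/-- Let `ω` be a nondegenerate alternating form on `T` (viewed as an isomorphism
`T ≃ T*`) and `L` a product structure such that `g(X,Y) = ½(ω(LX,Y) - ω(X,LY))` is
nondegenerate. With `Θ(X,Y) = ½(ω(LX,Y) + ω(X,LY))`, the structure `L` is
`g`-skew-symmetric and the generalized paracomplex structure
`K_ω(X+α) = ω⁻¹(α) + ω(X)` preserves the generalized metric
`E = {X + g(X) + Θ(X)}`. -/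
theorem stmt17 (T : Type) [AddCommGroup T] [Module ℝ T] [FiniteDimensional ℝ T]
    (ω : T ≃ₗ[ℝ] Module.Dual ℝ T) (hωalt : ∀ X, ω X X = 0)
    (L : T →ₗ[ℝ] T) (hL2 : L ∘ₗ L = LinearMap.id)
    (hLne : L ≠ LinearMap.id) (hLne' : L ≠ -LinearMap.id) :
    let gm : T →ₗ[ℝ] Module.Dual ℝ T :=
      (1/2 : ℝ) • (ω.toLinearMap ∘ₗ L - L.dualMap ∘ₗ ω.toLinearMap)
    let Θm : T →ₗ[ℝ] Module.Dual ℝ T :=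
      (1/2 : ℝ) • (ω.toLinearMap ∘ₗ L + L.dualMap ∘ₗ ω.toLinearMap)
    ∀ _hnd : ∀ X : T, (∀ Y : T, gm X Y = 0) → X = 0,
    (∀ X Y : T, gm (L X) Y + gm X (L Y) = 0) ∧
    (∀ X : T, ∃ Y : T,
      ((ω.symm (gm X + Θm X), ω X) : T × Module.Dual ℝ T) = (Y, gm Y + Θm Y)) :=
  stmt17_general T ω L hL2
end

section
/- Let P be a paracomplex structure on T skew-symmetric with respect to a nondegenerate symmetric form g, and let Θ be an alternating bilinear form on T. The generalized paracomplex structure K_P(X+α) = PX - P*α preserves the generalized metric E = {X + g(X) + Θ(X)} if and only if Θ(PX,Y) + Θ(X,PY) = 0 for all X,Y ∈ T. In particular Θ(X,Y) = g(X,PY) satisfies this condition. -/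
/-! `K_P` maps `(X, E X)` to `(P X, -P* (E X))`, so it preserves the graph of `E = g + Θ` exactly
when `-P* ∘ E = E ∘ P`, i.e. when `P` is skew for the bilinear form `E`. Since `P` is skew for `g`,
this is skewness for `Θ`. -/

section SkewEndomorphism

variable {R M : Type*} [CommRing R] [AddCommGroup M] [Module R M]

theorem LinearMap.neg_dualMap_comp_eq_iff (B : M →ₗ[R] Module.Dual R M) (P : M →ₗ[R] M) :
    (∀ X, -(P.dualMap (B X)) = B (P X)) ↔ ∀ X Y, B (P X) Y + B X (P Y) = 0 := by
  refine forall_congr' fun X => LinearMap.ext_iff.trans <| forall_congr' fun Y => ?_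
  rw [LinearMap.neg_apply, LinearMap.dualMap_apply, neg_eq_iff_add_eq_zero, add_comm]

theorem LinearMap.skew_add_iff_of_skew {B C : M →ₗ[R] Module.Dual R M} {P : M →ₗ[R] M}
    (hB : ∀ X Y, B (P X) Y + B X (P Y) = 0) :
    (∀ X Y, (B + C) (P X) Y + (B + C) X (P Y) = 0) ↔ ∀ X Y, C (P X) Y + C X (P Y) = 0 := by
  refine forall₂_congr fun X Y => ?_
  simp only [LinearMap.add_apply]
  exact ⟨fun h => by linear_combination h - hB X Y, fun h => by linear_combination h + hB X Y⟩

end SkewEndomorphism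

theorem stmt18_general (T : Type) [AddCommGroup T] [Module ℝ T]
    (g : T ≃ₗ[ℝ] Module.Dual ℝ T)
    (P : T →ₗ[ℝ] T)
    (hPskew : ∀ X Y : T, g (P X) Y + g X (P Y) = 0)
    (Θ : T →ₗ[ℝ] Module.Dual ℝ T) :
    ((∀ X : T, ∃ Y : T,
        ((P X, -(P.dualMap (g X + Θ X))) : T × Module.Dual ℝ T) = (Y, g Y + Θ Y)) ↔
      (∀ X Y : T, Θ (P X) Y + Θ X (P Y) = 0)) ∧
    (∀ X Y : T, g (P X) (P Y) + g X (P (P Y)) = 0) := by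
  set E : T →ₗ[ℝ] Module.Dual ℝ T := (g : T →ₗ[ℝ] Module.Dual ℝ T) + Θ
  have graph_mem_iff (X : T) : (∃ Y : T, ((P X, -(P.dualMap (g X + Θ X))) : T × Module.Dual ℝ T)
      = (Y, g Y + Θ Y)) ↔ -(P.dualMap (E X)) = E (P X) := by
    simp only [Prod.mk.injEq, exists_eq_left', E, LinearMap.add_apply, LinearEquiv.coe_coe]
  refine ⟨?_, fun X Y => hPskew X (P Y)⟩
  rw [forall_congr' graph_mem_iff, LinearMap.neg_dualMap_comp_eq_iff]
  exact LinearMap.skew_add_iff_of_skew hPskew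

/-- Let `P` be a paracomplex structure on `T` skew-symmetric for a nondegenerate
symmetric form `g`, and `Θ` an alternating form. The generalized paracomplex structure
`K_P(X+α) = PX - P*α` preserves the generalized metric `E = {X + g(X) + Θ(X)}` iff
`Θ(PX,Y) + Θ(X,PY) = 0` for all `X,Y`; in particular `Θ(X,Y) = g(X,PY)` satisfies
this condition. -/
theorem stmt18 (T : Type) [AddCommGroup T] [Module ℝ T] [FiniteDimensional ℝ T]
    (g : T ≃ₗ[ℝ] Module.Dual ℝ T) (hsym : ∀ X Y, g X Y = g Y X)
    (P : T →ₗ[ℝ] T) (hP2 : P ∘ₗ P = LinearMap.id)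
    (heig : Module.finrank ℝ (LinearMap.ker (P - LinearMap.id)) =
      Module.finrank ℝ (LinearMap.ker (P + LinearMap.id)))
    (hPskew : ∀ X Y : T, g (P X) Y + g X (P Y) = 0)
    (Θ : T →ₗ[ℝ] Module.Dual ℝ T) (halt : ∀ X Y, Θ X Y = -(Θ Y X)) :
    ((∀ X : T, ∃ Y : T,
        ((P X, -(P.dualMap (g X + Θ X))) : T × Module.Dual ℝ T) = (Y, g Y + Θ Y)) ↔
      (∀ X Y : T, Θ (P X) Y + Θ X (P Y) = 0)) ∧
    (∀ X Y : T, g (P X) (P Y) + g X (P (P Y)) = 0) :=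
  stmt18_general T g P hPskew Θ
end
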